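/- Let X be a complex Hilbert space, and let T and Tₙ (n ≥ 1) be closed subspaces of X × X (closed linear relations on X). Suppose there exists z ∈ ℂ and bounded everywhere-defined linear operators B and Bₙ on X such that the graph of B equals (T − z)⁻¹ := {(y − z·x, x) : (x, y) ∈ T}, the graph of Bₙ equals (Tₙ − z)⁻¹ := {(y − z·x, x) : (x, y) ∈ Tₙ} for all sufficiently large n, and ‖Bₙ − B‖ → 0 as n → ∞. Then Tₙ converges to T in the generalized sense, i.e. δ̂(Tₙ, T) → 0 as n → ∞. -/
import Mathlib


open Filter

/-- `δ(S,T) = sup { dist(φ, T) : φ ∈ S, ‖φ‖ = 1 }`, understood as `0` when the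
supremum runs over the empty set (e.g. when `S = {0}`). -/
noncomputable def relDelta {E : Type*} [NormedAddCommGroup E] (S T : Set E) : ℝ :=
  ⨆ φ : {φ : E // φ ∈ S ∧ ‖φ‖ = 1}, Metric.infDist (φ : E) T

/-- The gap `δ̂(S,T) = max{δ(S,T), δ(T,S)}` between two closed subspaces. -/
noncomputable def relGap {E : Type*} [NormedAddCommGroup E] (S T : Set E) : ℝ :=
  max (relDelta S T) (relDelta T S)

lemma mem_char {X : Type*} [NormedAddCommGroup X] [InnerProductSpace ℂ X]
    (S : Submodule ℂ (X × X)) (z : ℂ) (C : X →L[ℂ] X)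
    (hS : {q : X × X | q.2 = C q.1}
      = {q : X × X | ∃ r ∈ S, q = (r.2 - z • r.1, r.1)}) :
    ∀ r : X × X, r ∈ S ↔ r.1 = C (r.2 - z • r.1) := by
  intro r
  constructor
  · intro hr
    have : (r.2 - z • r.1, r.1) ∈ {q : X × X | q.2 = C q.1} := by
      rw [hS]; exact ⟨r, hr, rfl⟩
    exact this
  · intro hr
    have : (r.2 - z • r.1, r.1) ∈
        {q : X × X | ∃ r ∈ S, q = (r.2 - z • r.1, r.1)} := by
      rw [← hS]; exact hr
    obtain ⟨r', hr', heq⟩ := this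
    have h1 : r.1 = r'.1 := congrArg Prod.snd heq
    have h2 : r.2 - z • r.1 = r'.2 - z • r'.1 := congrArg Prod.fst heq
    have hr2 : r.2 = r'.2 := by
      have := h2
      rw [h1] at this
      exact by linear_combination (norm := module) this
    have : r = r' := Prod.ext h1 hr2
    rw [this]; exact hr'

lemma aux_delta {X : Type*} [NormedAddCommGroup X] [InnerProductSpace ℂ X]
    (S T : Submodule ℂ (X × X)) (z : ℂ) (C D : X →L[ℂ] X)
    (hS : {q : X × X | q.2 = C q.1}
      = {q : X × X | ∃ r ∈ S, q = (r.2 - z • r.1, r.1)})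
    (hT : {q : X × X | q.2 = D q.1}
      = {q : X × X | ∃ r ∈ T, q = (r.2 - z • r.1, r.1)}) :
    relDelta (S : Set (X × X)) (T : Set (X × X))
      ≤ (max 1 ‖z‖ * (1 + ‖z‖)) * ‖C - D‖ := by
  have hK : (0:ℝ) ≤ (max 1 ‖z‖ * (1 + ‖z‖)) * ‖C - D‖ := by positivity
  apply Real.iSup_le _ hK
  rintro ⟨φ, hφ, hn⟩
  set u := φ.2 - z • φ.1 with hu
  have hC : φ.1 = C u := (mem_char S z C hS φ).mp hφ
  set ψ : X × X := (D u, u + z • D u) with hψ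
  have hψT : ψ ∈ T := by
    rw [mem_char T z D hT]
    show D u = D ((u + z • D u) - z • D u)
    congr 1
    abel
  have hle : Metric.infDist (φ : X × X) (T : Set (X × X)) ≤ dist φ ψ :=
    Metric.infDist_le_dist_of_mem hψT
  have hφ2 : φ.2 = u + z • φ.1 := by rw [hu]; abel
  have hdiff : φ - ψ = ((C - D) u, z • ((C - D) u)) := by
    apply Prod.ext
    · show φ.1 - D u = (C - D) u
      rw [hC]; simp [ContinuousLinearMap.sub_apply]
    · show φ.2 - (u + z • D u) = z • ((C - D) u)
      rw [hφ2, hC]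
      simp [ContinuousLinearMap.sub_apply, smul_sub]
  have hnormu : ‖u‖ ≤ 1 + ‖z‖ := by
    have h1 : ‖φ.1‖ ≤ 1 := hn ▸ norm_fst_le φ
    have h2 : ‖φ.2‖ ≤ 1 := hn ▸ norm_snd_le φ
    calc ‖u‖ ≤ ‖φ.2‖ + ‖z • φ.1‖ := norm_sub_le _ _
      _ = ‖φ.2‖ + ‖z‖ * ‖φ.1‖ := by rw [norm_smul]
      _ ≤ 1 + ‖z‖ * 1 := by
          have : (0:ℝ) ≤ ‖z‖ := norm_nonneg _
          gcongr
      _ = 1 + ‖z‖ := by ring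
  have hCDu : ‖(C - D) u‖ ≤ ‖C - D‖ * (1 + ‖z‖) := by
    calc ‖(C - D) u‖ ≤ ‖C - D‖ * ‖u‖ := (C - D).le_opNorm u
      _ ≤ ‖C - D‖ * (1 + ‖z‖) := by gcongr
  have hdist : dist φ ψ ≤ (max 1 ‖z‖ * (1 + ‖z‖)) * ‖C - D‖ := by
    rw [dist_eq_norm, hdiff]
    have : ‖(((C - D) u, z • ((C - D) u)) : X × X)‖
        = max ‖(C - D) u‖ (‖z‖ * ‖(C - D) u‖) := by
      rw [Prod.norm_def, norm_smul]
    rw [this]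
    have hb : max ‖(C - D) u‖ (‖z‖ * ‖(C - D) u‖)
        ≤ max 1 ‖z‖ * ‖(C - D) u‖ := by
      apply max_le
      · nlinarith [norm_nonneg ((C - D) u), le_max_left (1:ℝ) ‖z‖]
      · nlinarith [norm_nonneg ((C - D) u), le_max_right (1:ℝ) ‖z‖]
    calc max ‖(C - D) u‖ (‖z‖ * ‖(C - D) u‖) ≤ max 1 ‖z‖ * ‖(C - D) u‖ := hb
      _ ≤ max 1 ‖z‖ * (‖C - D‖ * (1 + ‖z‖)) := by
          have : (0:ℝ) ≤ max 1 ‖z‖ := le_trans zero_le_one (le_max_left _ _)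
          gcongr
      _ = (max 1 ‖z‖ * (1 + ‖z‖)) * ‖C - D‖ := by ring
  exact hle.trans hdist

/-- If the resolvents `(Tₙ − z)⁻¹` and `(T − z)⁻¹` of closed
linear relations `Tₙ, T` on a complex Hilbert space `X` are graphs of bounded
everywhere-defined operators `Bₙ, B` (for sufficiently large `n`) and
`‖Bₙ − B‖ → 0`, then `Tₙ → T` in the generalized sense, i.e.
`δ̂(Tₙ, T) → 0`. -/
theorem stmt_11
    {X : Type*} [NormedAddCommGroup X] [InnerProductSpace ℂ X] [CompleteSpace X]
    (T : Submodule ℂ (X × X)) (Tn : ℕ → Submodule ℂ (X × X))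
    (hT : IsClosed (T : Set (X × X))) (hTn : ∀ n, IsClosed ((Tn n : Set (X × X))))
    (z : ℂ) (B : X →L[ℂ] X) (Bn : ℕ → X →L[ℂ] X)
    (hB : {q : X × X | q.2 = B q.1}
      = {q : X × X | ∃ r ∈ T, q = (r.2 - z • r.1, r.1)})
    (hBn : ∀ᶠ n in atTop, {q : X × X | q.2 = Bn n q.1}
      = {q : X × X | ∃ r ∈ Tn n, q = (r.2 - z • r.1, r.1)})
    (hconv : Tendsto (fun n => ‖Bn n - B‖) atTop (nhds 0)) :
    Tendsto (fun n => relGap ((Tn n : Set (X × X))) (T : Set (X × X))) atTop (nhds 0) := by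
  set K : ℝ := max 1 ‖z‖ * (1 + ‖z‖) with hK
  refine squeeze_zero' ?_ ?_ (show Tendsto (fun n => K * ‖Bn n - B‖) atTop (nhds 0) by
    simpa using hconv.const_mul K)
  · filter_upwards with n
    exact le_trans (Real.iSup_nonneg fun φ => Metric.infDist_nonneg) (le_max_left _ _)
  · filter_upwards [hBn] with n hn
    apply max_le
    · exact aux_delta (Tn n) T z (Bn n) B hn hB
    · have := aux_delta T (Tn n) z B (Bn n) hB hn
      rwa [norm_sub_rev] at this
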